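/- arXiv:1911.00223 — 4 statements merged into one kernel-verified Lean document; each statement's English description precedes it below -/
import Mathlib

section
/- Let G be a finite connected simple graph with real edge weights that are pairwise distinct, and let T be its (unique) minimum spanning tree. If Prim's algorithm is run on G starting from a seed vertex v₀, producing the Prim order P of G, and Prim's algorithm is run on T starting from the same seed vertex v₀, producing the Prim order P_T of T, then P = P_T; that is, the Prim order of G with seed v₀ coincides with the Prim order of T with seed v₀. -/
open SimpleGraph

variable {V : Type*}

/-- `P` is a Prim order of the graph `H` restricted to the vertex set `S`, with seed `v₀`:
`P` maps `S` bijectively onto `{1, …, |S|}`, `P v₀ = 1`, and each vertex other than the seed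
is joined to an earlier vertex by an edge of minimum weight among all edges of `H` (within `S`)
from the earlier vertices to the later ones. -/
def IsPrimOrderOn (H : SimpleGraph V) (w : Sym2 V → ℝ)
    (S : Set V) (v₀ : V) (P : V → ℕ) : Prop :=
  v₀ ∈ S ∧ P v₀ = 1 ∧ Set.BijOn P S (Set.Icc 1 S.ncard) ∧
    ∀ v ∈ S, P v ≠ 1 →
      ∃ u ∈ S, P u < P v ∧ H.Adj u v ∧
        ∀ x ∈ S, ∀ y ∈ S, P x < P v → P v ≤ P y → H.Adj x y →
          w s(u, v) ≤ w s(x, y)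

/-- Total edge weight of a graph on a finite vertex type. -/
noncomputable def totalWeight [Fintype V] (H : SimpleGraph V) (w : Sym2 V → ℝ) : ℝ :=
  ∑ e ∈ H.edgeSet.toFinite.toFinset, w e

/-- `H` is a tree on the vertex set `S`: all its edges lie within `S`, any two vertices of `S`
are joined by a path, and `H` is acyclic. -/
def IsTreeOn (H : SimpleGraph V) (S : Set V) : Prop :=
  (∀ e ∈ H.edgeSet, ∀ v ∈ e, v ∈ S) ∧ (∀ u ∈ S, ∀ v ∈ S, H.Reachable u v) ∧ H.IsAcyclic

/-- `T` is a minimum spanning tree of `G` on the vertex set `S`. -/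
def IsMSTOn [Fintype V] (G : SimpleGraph V) (w : Sym2 V → ℝ) (S : Set V)
    (T : SimpleGraph V) : Prop :=
  T ≤ G ∧ IsTreeOn T S ∧
    ∀ T' : SimpleGraph V, T' ≤ G → IsTreeOn T' S → totalWeight T w ≤ totalWeight T' w

/-- Restriction of a graph to the edges with both endpoints in `S`. -/
def restrictTo (H : SimpleGraph V) (S : Set V) : SimpleGraph V where
  Adj a b := H.Adj a b ∧ a ∈ S ∧ b ∈ S
  symm := ⟨fun a b ⟨h, ha, hb⟩ => ⟨h.symm, hb, ha⟩⟩
  loopless := ⟨fun a ⟨h, _, _⟩ => H.loopless.irrefl a h⟩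

/-- Prim order of an edge: the larger of the Prim orders of its endpoints. -/
def edgeOrder (P : V → ℕ) : Sym2 V → ℕ :=
  Sym2.lift ⟨fun u v => max (P u) (P v), fun u v => max_comm _ _⟩


/-!
An edge chosen by Prim's algorithm on `G` is the lightest edge of `G` leaving the set of vertices
reached so far, so by the cut property (an exchange argument) it belongs to the minimum spanning
tree `T`. Inductively both runs have reached the same set of vertices; the lightest edge of `T`
leaving it is then at most as heavy as the one of `G` (which lies in `T`) and at least as heavy
(as `T ≤ G`), so distinct weights force the two runs to add the same vertex next.
-/

namespace SimpleGraph

variable {G T : SimpleGraph V}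

theorem Reachable.of_forall_adj_reachable {H : SimpleGraph V}
    (h : ∀ ⦃u v⦄, G.Adj u v → H.Reachable u v) {u v : V} (huv : G.Reachable u v) :
    H.Reachable u v := by
  obtain ⟨p⟩ := huv
  induction p with
  | nil => rfl
  | cons hadj _ ih => exact (h hadj).trans ih

theorem Walk.exists_eq_append_cons_of_mem_of_notMem {L : Set V} {a b : V} (p : G.Walk a b)
    (ha : a ∈ L) (hb : b ∉ L) :
    ∃ (x y : V) (hxy : G.Adj x y) (q₁ : G.Walk a x) (q₂ : G.Walk y b),
      x ∈ L ∧ y ∉ L ∧ p = q₁.append (cons hxy q₂) := by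
  induction p with
  | nil => exact absurd ha hb
  | @cons a c _ hac q ih =>
    by_cases hc : c ∈ L
    · obtain ⟨x, y, hxy, q₁, q₂, hx, hy, rfl⟩ := ih hc hb
      exact ⟨x, y, hxy, cons hac q₁, q₂, hx, hy, rfl⟩
    · exact ⟨a, c, hac, nil, q, ha, hc, rfl⟩

theorem Walk.IsTrail.exists_crossing_reachable_deleteEdges {L : Set V} {a b : V}
    {p : G.Walk a b} (hp : p.IsTrail) (ha : a ∈ L) (hb : b ∉ L) :
    ∃ x ∈ L, ∃ y ∉ L, G.Adj x y ∧ (G.deleteEdges {s(x, y)}).Reachable a x ∧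
      (G.deleteEdges {s(x, y)}).Reachable y b := by
  obtain ⟨x, y, hxy, q₁, q₂, hx, hy, rfl⟩ := p.exists_eq_append_cons_of_mem_of_notMem ha hb
  have hnodup := hp.edges_nodup
  simp only [edges_append, edges_cons, List.nodup_append, List.nodup_cons] at hnodup
  have hq₁ : s(x, y) ∉ q₁.edges := fun h => hnodup.2.2 _ h _ List.mem_cons_self rfl
  refine ⟨x, hx, y, hy, hxy, ⟨q₁.toDeleteEdges _ ?_⟩, ⟨q₂.toDeleteEdges _ ?_⟩⟩
  · rintro e he rfl
    exact hq₁ he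
  · rintro e he rfl
    exact hnodup.2.1.1 he

theorem IsTree.deleteEdges_sup_edge (hT : T.IsTree) {x y a b : V} (hxy : T.Adj x y)
    (hax : (T.deleteEdges {s(x, y)}).Reachable a x)
    (hyb : (T.deleteEdges {s(x, y)}).Reachable y b) :
    (T.deleteEdges {s(x, y)} ⊔ edge a b).IsTree := by
  set F := T.deleteEdges {s(x, y)}
  have hxy_bridge : ¬F.Reachable x y :=
    isBridge_iff.mp (isAcyclic_iff_forall_isBridge.mp hT.isAcyclic (T.mem_edgeSet.mpr hxy))
  have hab : ¬F.Reachable a b := fun h => hxy_bridge (hax.symm.trans (h.trans hyb.symm))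
  have hF_xy : (F ⊔ edge a b).Reachable x y := by
    have hab' : (F ⊔ edge a b).Adj a b :=
      Or.inr ((edge_adj a b a b).mpr ⟨Or.inl ⟨rfl, rfl⟩, fun h => hab (h ▸ Reachable.rfl)⟩)
    exact (hax.mono le_sup_left).symm.trans (hab'.reachable.trans (hyb.mono le_sup_left).symm)
  have := hT.connected.nonempty
  refine ⟨⟨fun u v => ?_⟩, (hT.isAcyclic.anti (deleteEdges_le _)).sup_edge_of_not_reachable hab⟩
  refine (hT.connected.preconnected u v).of_forall_adj_reachable fun p q hpq => ?_
  by_cases hf : s(p, q) = s(x, y)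
  · rcases Sym2.eq_iff.mp hf with ⟨rfl, rfl⟩ | ⟨rfl, rfl⟩
    exacts [hF_xy, hF_xy.symm]
  · exact Adj.reachable (Or.inl (deleteEdges_adj.mpr ⟨hpq, hf⟩))

end SimpleGraph

theorem isTreeOn_univ_iff [Nonempty V] {H : SimpleGraph V} : IsTreeOn H Set.univ ↔ H.IsTree :=
  ⟨fun ⟨_, hreach, hacyc⟩ => ⟨⟨fun u v => hreach u trivial v trivial⟩, hacyc⟩,
    fun hH => ⟨fun _ _ _ _ => trivial, fun u _ v _ => hH.connected.preconnected u v, hH.isAcyclic⟩⟩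

theorem totalWeight_deleteEdges_sup_edge [Fintype V] {T : SimpleGraph V} (w : Sym2 V → ℝ)
    {x y a b : V} (hxy : T.Adj x y) (hab : ¬T.Adj a b) (hne : a ≠ b) :
    totalWeight (T.deleteEdges {s(x, y)} ⊔ edge a b) w + w s(x, y) =
      totalWeight T w + w s(a, b) := by
  classical
  have hedges : (T.deleteEdges {s(x, y)} ⊔ edge a b).edgeSet.toFinite.toFinset =
      insert s(a, b) (T.edgeSet.toFinite.toFinset.erase s(x, y)) := by
    ext e
    simp only [Set.Finite.mem_toFinset, edgeSet_sup, edgeSet_deleteEdges, edgeSet_edge_of_ne hne,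
      Finset.mem_insert, Finset.mem_erase, Set.mem_union, Set.mem_sdiff, Set.mem_singleton_iff]
    tauto
  have hsplit := Finset.add_sum_erase T.edgeSet.toFinite.toFinset w
    (Set.Finite.mem_toFinset _ |>.mpr (T.mem_edgeSet.mpr hxy))
  rw [totalWeight, totalWeight, hedges, Finset.sum_insert (by simp [hab]), ← hsplit]
  ring

def IsMinCrossingEdge (H : SimpleGraph V) (w : Sym2 V → ℝ) (L : Set V) (u v : V) : Prop :=
  u ∈ L ∧ v ∉ L ∧ H.Adj u v ∧ ∀ x ∈ L, ∀ y ∉ L, H.Adj x y → w s(u, v) ≤ w s(x, y)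

section MST

variable [Fintype V] {G T : SimpleGraph V} {w : Sym2 V → ℝ}

theorem IsMSTOn.adj_of_isMinCrossingEdge (hT : IsMSTOn G w Set.univ T)
    (hw : Set.InjOn w G.edgeSet) {L : Set V} {a b : V} (he : IsMinCrossingEdge G w L a b) :
    T.Adj a b := by
  classical
  obtain ⟨hTG, hT_tree, hT_min⟩ := hT
  obtain ⟨ha, hb, hab, hmin⟩ := he
  have : Nonempty V := ⟨a⟩
  rw [isTreeOn_univ_iff] at hT_tree
  by_contra hnadj
  obtain ⟨p⟩ := hT_tree.connected.preconnected a b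
  obtain ⟨x, hx, y, hy, hxy, hax, hyb⟩ :=
    (p.bypass_isPath).isTrail.exists_crossing_reachable_deleteEdges ha hb
  have hlt : w s(a, b) < w s(x, y) := by
    refine (hmin x hx y hy (hTG hxy)).lt_of_ne fun h => hnadj ?_
    rw [← mem_edgeSet, hw hab (hTG hxy) h]
    exact hxy
  have hle := hT_min _ (sup_le ((deleteEdges_le _).trans hTG) (G.edge_le_iff.mpr (.inr hab)))
    (isTreeOn_univ_iff.mpr (hT_tree.deleteEdges_sup_edge hxy hax hyb))
  have := totalWeight_deleteEdges_sup_edge w hxy hnadj hab.ne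
  linarith

theorem IsMinCrossingEdge.eq_of_isMSTOn (hT : IsMSTOn G w Set.univ T)
    (hw : Set.InjOn w G.edgeSet) {L : Set V} {u v u' v' : V}
    (he : IsMinCrossingEdge G w L u v) (he' : IsMinCrossingEdge T w L u' v') : v = v' := by
  have huv_T : T.Adj u v := hT.adj_of_isMinCrossingEdge hw he
  obtain ⟨hu, hv, huv, hmin⟩ := he
  obtain ⟨hu', hv', hu'v', hmin'⟩ := he'
  have heq : s(u, v) = s(u', v') :=
    hw huv (hT.1 hu'v') <| le_antisymm (hmin u' hu' v' hv' (hT.1 hu'v')) (hmin' u hu v hv huv_T)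
  rcases Sym2.eq_iff.mp heq with ⟨-, rfl⟩ | ⟨-, rfl⟩
  · rfl
  · exact absurd hu' hv

end MST

section Prim

variable {H : SimpleGraph V} {w : Sym2 V → ℝ} {v₀ : V} {P : V → ℕ}

theorem IsPrimOrderOn.injective (hP : IsPrimOrderOn H w Set.univ v₀ P) : P.Injective :=
  Set.injOn_univ.mp hP.2.2.1.injOn

theorem IsPrimOrderOn.eq_of_apply_eq_one (hP : IsPrimOrderOn H w Set.univ v₀ P) {v : V}
    (hv : P v = 1) : v = v₀ :=
  hP.injective (hv.trans hP.2.1.symm)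

theorem IsPrimOrderOn.range_eq (hP : IsPrimOrderOn H w Set.univ v₀ P) :
    Set.range P = Set.Icc 1 (Nat.card V) := by
  rw [← Set.image_univ, hP.2.2.1.image_eq, Set.ncard_univ]

theorem IsPrimOrderOn.isMinCrossingEdge (hP : IsPrimOrderOn H w Set.univ v₀ P) {v : V}
    (hv : P v ≠ 1) : ∃ u, IsMinCrossingEdge H w {x | P x < P v} u v := by
  obtain ⟨u, -, hu, huv, hmin⟩ := hP.2.2.2 v trivial hv
  exact ⟨u, hu, lt_irrefl (P v), huv,
    fun x hx y hy hxy => hmin x trivial y trivial hx (not_lt.mp hy) hxy⟩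

end Prim

section PrimMST

variable [Fintype V] {G T : SimpleGraph V} {w : Sym2 V → ℝ} {v₀ : V} {P PT : V → ℕ}

theorem IsPrimOrderOn.apply_eq_iff_of_isMSTOn (hw : Set.InjOn w G.edgeSet)
    (hT : IsMSTOn G w Set.univ T) (hP : IsPrimOrderOn G w Set.univ v₀ P)
    (hPT : IsPrimOrderOn T w Set.univ v₀ PT) {k : ℕ} (hk : ∀ x, P x < k ↔ PT x < k) :
    ∀ x, P x = k ↔ PT x = k := by
  suffices h : ∀ v v', P v = k → PT v' = k → v = v' by
    intro x
    constructor
    · intro hx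
      obtain ⟨v', hv'⟩ : k ∈ Set.range PT := by rw [hPT.range_eq, ← hP.range_eq]; exact ⟨x, hx⟩
      rwa [h x v' hx hv']
    · intro hx
      obtain ⟨v, hv⟩ : k ∈ Set.range P := by rw [hP.range_eq, ← hPT.range_eq]; exact ⟨x, hx⟩
      rwa [← h v x hv hx]
  rintro v v' rfl hv'
  by_cases h1 : P v = 1
  · exact (hP.eq_of_apply_eq_one h1).trans (hPT.eq_of_apply_eq_one (hv'.trans h1)).symm
  obtain ⟨u, hu⟩ := hP.isMinCrossingEdge h1
  obtain ⟨u', hu'⟩ := hPT.isMinCrossingEdge (hv'.trans_ne h1)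
  have hL : {x | PT x < PT v'} = {x | P x < P v} := by
    ext x
    simp only [Set.mem_ofPred_eq, hv', hk]
  exact hu.eq_of_isMSTOn hT hw (hL ▸ hu')

end PrimMST

theorem prim_order_of_graph_eq_prim_order_of_mst_general {V : Type*} [Fintype V] (G T : SimpleGraph V) (w : Sym2 V → ℝ)
    (hdistinct : Set.InjOn w G.edgeSet)
    (hT : IsMSTOn G w Set.univ T) (v₀ : V) (P PT : V → ℕ)
    (hP : IsPrimOrderOn G w Set.univ v₀ P)
    (hPT : IsPrimOrderOn T w Set.univ v₀ PT) :
    P = PT := by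
  have hprefix : ∀ k x, P x < k ↔ PT x < k := by
    intro k
    induction k with
    | zero => simp
    | succ k ih =>
      intro x
      rw [Nat.lt_succ_iff_lt_or_eq, Nat.lt_succ_iff_lt_or_eq, ih x,
        hP.apply_eq_iff_of_isMSTOn hdistinct hT hPT ih x]
  funext x
  exact eq_of_forall_gt_iff fun k => hprefix k x

theorem prim_order_of_graph_eq_prim_order_of_mst {V : Type*} [Fintype V] (G T : SimpleGraph V) (w : Sym2 V → ℝ)
    (hconn : G.Connected) (hdistinct : Set.InjOn w G.edgeSet)
    (hT : IsMSTOn G w Set.univ T) (v₀ : V) (P PT : V → ℕ)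
    (hP : IsPrimOrderOn G w Set.univ v₀ P)
    (hPT : IsPrimOrderOn T w Set.univ v₀ PT) :
    P = PT :=
  prim_order_of_graph_eq_prim_order_of_mst_general G T w hdistinct hT v₀ P PT hP hPT
end

section
/- Let G be a finite connected simple graph with real edge weights (ties among edge weights allowed), and suppose a run of Prim's algorithm on G with seed vertex v₀ produces the Prim order P of G and the spanning tree T consisting of the edges chosen at each step (so that T is a minimum spanning tree of G). Then P is a Prim order of T with seed v₀; that is, every Prim order of G is a Prim order of the minimum spanning tree that the corresponding run produces. -/
open SimpleGraph

variable {V : Type*}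

/-! Every edge of the produced tree is an edge of `G`, so at each step an edge that is minimal among
the edges of `G` leaving the earlier vertices is a fortiori minimal among those of the tree; and the
edge chosen at that step is itself an edge of the tree. -/

theorem IsPrimOrderOn.of_le {H H' : SimpleGraph V} {w : Sym2 V → ℝ} {S : Set V} {v₀ : V}
    {P : V → ℕ} (hle : H' ≤ H) (hP : IsPrimOrderOn H w S v₀ P)
    (hmin : ∀ v ∈ S, P v ≠ 1 → ∃ u ∈ S, P u < P v ∧ H'.Adj u v ∧
      ∀ x ∈ S, ∀ y ∈ S, P x < P v → P v ≤ P y → H.Adj x y → w s(u, v) ≤ w s(x, y)) :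
    IsPrimOrderOn H' w S v₀ P := by
  obtain ⟨hv₀, hP₁, hbij, -⟩ := hP
  refine ⟨hv₀, hP₁, hbij, fun v hv hne => ?_⟩
  obtain ⟨u, hu, hlt, hadj, hu_min⟩ := hmin v hv hne
  exact ⟨u, hu, hlt, hadj, fun x hx y hy hxv hvy hxy => hu_min x hx y hy hxv hvy (hle hxy)⟩

theorem prim_order_of_graph_is_prim_order_of_produced_tree_general {V : Type*} (G T : SimpleGraph V) (w : Sym2 V → ℝ)
    (v₀ : V) (P : V → ℕ) (c : V → V)
    (hP : IsPrimOrderOn G w Set.univ v₀ P)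
    (hc : ∀ v : V, P v ≠ 1 → P (c v) < P v ∧ G.Adj (c v) v ∧
      ∀ x y : V, P x < P v → P v ≤ P y → G.Adj x y → w s(c v, v) ≤ w s(x, y))
    (hTedges : T.edgeSet = {e | ∃ v, P v ≠ 1 ∧ e = s(c v, v)}) :
    IsPrimOrderOn T w Set.univ v₀ P := by
  have hTG : T ≤ G := by
    rw [← edgeSet_subset_edgeSet, hTedges]
    rintro _ ⟨v, hv, rfl⟩
    exact (hc v hv).2.1
  refine hP.of_le hTG fun v _ hne => ?_
  obtain ⟨hlt, -, hmin⟩ := hc v hne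
  have hT : T.Adj (c v) v := by
    rw [← mem_edgeSet, hTedges]
    exact ⟨v, hne, rfl⟩
  exact ⟨c v, trivial, hlt, hT, fun x _ y _ => hmin x y⟩

theorem prim_order_of_graph_is_prim_order_of_produced_tree {V : Type*} [Fintype V] (G T : SimpleGraph V) (w : Sym2 V → ℝ)
    (hconn : G.Connected) (v₀ : V) (P : V → ℕ) (c : V → V)
    (hP : IsPrimOrderOn G w Set.univ v₀ P)
    (hc : ∀ v : V, P v ≠ 1 → P (c v) < P v ∧ G.Adj (c v) v ∧
      ∀ x y : V, P x < P v → P v ≤ P y → G.Adj x y → w s(c v, v) ≤ w s(x, y))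
    (hTedges : T.edgeSet = {e | ∃ v, P v ≠ 1 ∧ e = s(c v, v)}) :
    IsPrimOrderOn T w Set.univ v₀ P :=
  prim_order_of_graph_is_prim_order_of_produced_tree_general G T w v₀ P c hP hc hTedges
end

section
/- Let G be a finite connected simple graph with real edge weights (ties among edge weights allowed), and suppose a run of Prim's algorithm on G with an arbitrary seed vertex produces the Prim order P and the minimum spanning tree T with edge set E_T. Let E_max ⊆ E_T be the set of edges of T whose weight equals the maximum edge weight in T, and let e_max = (v_i, v_j) be the element of E_max with the largest Prim order P(e_max) = max(P(v_i), P(v_j)). Then deleting e_max from T leaves exactly two connected components T_L and T_R, and their vertex sets are V_L = {v ∈ V : P(v) < P(e_max)} and V_R = {v ∈ V : P(v) ≥ P(e_max)}. -/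
open SimpleGraph

variable {V : Type*}

/-!
Write the deleted edge as `s(c m, m)`, where `c m` is the vertex through which Prim's run attached
`m`; its Prim order is `P m`. No vertex `v` after `m` was attached through a vertex before `m`:
Prim's choice at `m` would give `w s(c m, m) ≤ w s(c v, v)`, so both edges would be heaviest in the
tree, and `s(c v, v)` would have the larger Prim order. Hence every other tree edge stays on one
side of the cut `{P < P m}`, and following parent edges joins every vertex of the left side to the
seed and every vertex of the right side to `m`.
-/

namespace SimpleGraph

variable {H : SimpleGraph V}

theorem Reachable.iff_of_forall_adj {p : V → Prop} (hp : ∀ a b, H.Adj a b → (p a ↔ p b))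
    {a b : V} (h : H.Reachable a b) : p a ↔ p b :=
  Relation.reflTransGen_le_of_equivalence_of_le (r := fun x y => p x ↔ p y)
    ⟨fun _ => Iff.rfl, Iff.symm, Iff.trans⟩ hp a b ((reachable_iff_reflTransGen a b).mp h)

theorem reachable_of_forall_ne_exists_adj {p : V → Prop} {r : V} (f : V → ℕ)
    (h : ∀ v, p v → v ≠ r → ∃ u, p u ∧ f u < f v ∧ H.Adj u v) :
    ∀ v, p v → H.Reachable v r := by
  intro v
  induction hn : f v using Nat.strong_induction_on generalizing v with
  | _ n ih =>
    intro hv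
    by_cases hvr : v = r
    · exact hvr ▸ Reachable.refl v
    obtain ⟨u, hu, hlt, hadj⟩ := h v hv hvr
    exact hadj.symm.reachable.trans (ih (f u) (hn ▸ hlt) u rfl hu)

theorem ConnectedComponent.supp_eq_setOf_of_forall_reachable {p : V → Prop} {a : V}
    (hp : ∀ x y, H.Adj x y → (p x ↔ p y)) (ha : p a) (hreach : ∀ v, p v → H.Reachable v a) :
    (H.connectedComponentMk a).supp = {v | p v} := by
  ext v
  rw [mem_supp_iff, ConnectedComponent.eq]
  exact ⟨fun h => (h.iff_of_forall_adj hp).mpr ha, hreach v⟩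

theorem exists_connectedComponents_supp_eq_setOf_and_compl {p : V → Prop} {a b : V}
    (hp : ∀ x y, H.Adj x y → (p x ↔ p y)) (ha : p a) (hb : ¬ p b)
    (hreach_a : ∀ v, p v → H.Reachable v a) (hreach_b : ∀ v, ¬ p v → H.Reachable v b) :
    ∃ cL cR : H.ConnectedComponent, cL ≠ cR ∧ (∀ cc, cc = cL ∨ cc = cR) ∧
      cL.supp = {v | p v} ∧ cR.supp = {v | ¬ p v} := by
  have hL := ConnectedComponent.supp_eq_setOf_of_forall_reachable hp ha hreach_a
  have hR := ConnectedComponent.supp_eq_setOf_of_forall_reachable (p := fun v => ¬ p v)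
    (fun x y h => not_congr (hp x y h)) hb hreach_b
  refine ⟨_, _, fun h => ?_, fun cc => cc.ind fun v => ?_, hL, hR⟩
  · have hb' : b ∈ (H.connectedComponentMk a).supp :=
      h ▸ (ConnectedComponent.mem_supp_iff _ b).mpr rfl
    rw [hL] at hb'
    exact hb hb'
  · by_cases hv : p v
    · exact Or.inl ((ConnectedComponent.mem_supp_iff _ v).mp (hL ▸ hv))
    · exact Or.inr ((ConnectedComponent.mem_supp_iff _ v).mp (hR ▸ hv))

end SimpleGraph

section PrimParent

variable {P : V → ℕ} {c : V → V}

def IsPrimParent (G : SimpleGraph V) (w : Sym2 V → ℝ) (P : V → ℕ) (c : V → V) : Prop :=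
  ∀ v, P v ≠ 1 → P (c v) < P v ∧ G.Adj (c v) v ∧
    ∀ x y, P x < P v → P v ≤ P y → G.Adj x y → w s(c v, v) ≤ w s(x, y)

def parentEdges (P : V → ℕ) (c : V → V) : Set (Sym2 V) :=
  {e | ∃ v, P v ≠ 1 ∧ e = s(c v, v)}

theorem edgeOrder_parent {v : V} (hv : P (c v) < P v) : edgeOrder P s(c v, v) = P v :=
  max_eq_right hv.le

theorem eq_of_parent_edge_eq {u v : V} (hu : P (c u) < P u) (hv : P (c v) < P v)
    (h : s(c u, u) = s(c v, v)) : u = v := by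
  rcases Sym2.eq_iff.mp h with ⟨-, h⟩ | ⟨h₁, h₂⟩
  · exact h
  · subst h₁
    rw [← h₂] at hv
    omega

theorem IsPrimParent.le_parent_of_lt {G T : SimpleGraph V} {w : Sym2 V → ℝ} {m : V}
    (hc : IsPrimParent G w P c) (hT : T.edgeSet = parentEdges P c) (hm : P m ≠ 1)
    (hmax : ∀ e ∈ T.edgeSet, w e ≤ w s(c m, m))
    (hlargest : ∀ e ∈ T.edgeSet, w e = w s(c m, m) → edgeOrder P e ≤ P m) :
    ∀ v, P m < P v → P m ≤ P (c v) := by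
  intro v hv
  by_contra! hcv
  have hv1 : P v ≠ 1 := by omega
  obtain ⟨hlt, hadj, -⟩ := hc v hv1
  have hmem : s(c v, v) ∈ T.edgeSet := hT ▸ ⟨v, hv1, rfl⟩
  have hw : w s(c v, v) = w s(c m, m) :=
    le_antisymm (hmax _ hmem) ((hc m hm).2.2 (c v) v hcv hv.le hadj)
  have hord := hlargest _ hmem hw
  rw [edgeOrder_parent hlt] at hord
  omega

variable {T : SimpleGraph V} {m : V}

theorem adj_deleteEdges_parent_edge (hdesc : ∀ v, P v ≠ 1 → P (c v) < P v)
    (hT : T.edgeSet = parentEdges P c) (hm : P m ≠ 1) {v : V} (hv : P v ≠ 1) (hvm : v ≠ m) :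
    (T.deleteEdges {s(c m, m)}).Adj (c v) v := by
  refine (deleteEdges_adj ..).mpr ⟨show s(c v, v) ∈ T.edgeSet from hT ▸ ⟨v, hv, rfl⟩, fun h => ?_⟩
  exact hvm (eq_of_parent_edge_eq (hdesc v hv) (hdesc m hm) h)

theorem lt_iff_lt_of_adj_deleteEdges_parent_edge (hP : P.Injective)
    (hdesc : ∀ v, P v ≠ 1 → P (c v) < P v) (hT : T.edgeSet = parentEdges P c)
    (hcut : ∀ v, P m < P v → P m ≤ P (c v)) {a b : V}
    (h : (T.deleteEdges {s(c m, m)}).Adj a b) : P a < P m ↔ P b < P m := by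
  obtain ⟨hab, hne⟩ := (deleteEdges_adj ..).mp h
  obtain ⟨v, hv, he⟩ : s(a, b) ∈ parentEdges P c := hT ▸ hab
  have hvm : P v ≠ P m := hP.ne (by rintro rfl; exact hne he)
  have hcv := hdesc v hv
  have hcut_v := hcut v
  rcases Sym2.eq_iff.mp he with ⟨rfl, rfl⟩ | ⟨rfl, rfl⟩ <;> omega

theorem exists_connectedComponents_deleteEdges_parent_edge {v₀ : V}
    (hP : P.Injective) (hP₀ : P v₀ = 1) (hdesc : ∀ v, P v ≠ 1 → P (c v) < P v)
    (hT : T.edgeSet = parentEdges P c) (hm : 1 < P m)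
    (hcut : ∀ v, P m < P v → P m ≤ P (c v)) :
    ∃ cL cR : (T.deleteEdges {s(c m, m)}).ConnectedComponent,
      cL ≠ cR ∧ (∀ cc, cc = cL ∨ cc = cR) ∧
      cL.supp = {v | P v < P m} ∧ cR.supp = {v | ¬ P v < P m} := by
  refine SimpleGraph.exists_connectedComponents_supp_eq_setOf_and_compl
    (fun _ _ => lt_iff_lt_of_adj_deleteEdges_parent_edge hP hdesc hT hcut) (hP₀ ▸ hm)
    (lt_irrefl _) (SimpleGraph.reachable_of_forall_ne_exists_adj P fun v hv hne => ?_)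
    (SimpleGraph.reachable_of_forall_ne_exists_adj P fun v hv hne => ?_)
  · have hv1 : P v ≠ 1 := fun h => hne (hP (h.trans hP₀.symm))
    have hlt := hdesc v hv1
    exact ⟨c v, hlt.trans hv, hlt,
      adj_deleteEdges_parent_edge hdesc hT hm.ne' hv1 (by rintro rfl; exact lt_irrefl _ hv)⟩
  · have hgt : P m < P v := lt_of_le_of_ne (not_lt.mp hv) (hP.ne hne).symm
    have hv1 : P v ≠ 1 := by omega
    exact ⟨c v, (hcut v hgt).not_gt, hdesc v hv1,
      adj_deleteEdges_parent_edge hdesc hT hm.ne' hv1 hne⟩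

end PrimParent

theorem vertex_sets_after_breaking_longest_edge_with_largest_prim_order_general {V : Type*} (G T : SimpleGraph V) (w : Sym2 V → ℝ)
    (v₀ : V) (P : V → ℕ) (c : V → V)
    (hP : IsPrimOrderOn G w Set.univ v₀ P)
    (hc : ∀ v : V, P v ≠ 1 → P (c v) < P v ∧ G.Adj (c v) v ∧
      ∀ x y : V, P x < P v → P v ≤ P y → G.Adj x y → w s(c v, v) ≤ w s(x, y))
    (hTedges : T.edgeSet = {e | ∃ v, P v ≠ 1 ∧ e = s(c v, v)})
    (vi vj : V) (hmem : s(vi, vj) ∈ T.edgeSet)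
    (hmax : ∀ e ∈ T.edgeSet, w e ≤ w s(vi, vj))
    (hlargest : ∀ e ∈ T.edgeSet, w e = w s(vi, vj) → edgeOrder P e ≤ edgeOrder P s(vi, vj)) :
    ∃ cL cR : (T.deleteEdges {s(vi, vj)}).ConnectedComponent,
      cL ≠ cR ∧ (∀ cc, cc = cL ∨ cc = cR) ∧
      cL.supp = {v | P v < edgeOrder P s(vi, vj)} ∧
      cR.supp = {v | edgeOrder P s(vi, vj) ≤ P v} := by
  obtain ⟨-, hP₀, hbij, -⟩ := hP
  have hT : T.edgeSet = parentEdges P c := hTedges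
  obtain ⟨m, hm, he⟩ : s(vi, vj) ∈ parentEdges P c := hT ▸ hmem
  rw [he] at hmax hlargest ⊢
  rw [edgeOrder_parent (hc m hm).1] at hlargest ⊢
  have hcut := IsPrimParent.le_parent_of_lt hc hT hm hmax hlargest
  have h1m : 1 < P m := lt_of_le_of_ne (hbij.mapsTo (Set.mem_univ m)).1 (Ne.symm hm)
  obtain ⟨cL, cR, hne, hall, hL, hR⟩ := exists_connectedComponents_deleteEdges_parent_edge
    (Set.injOn_univ.mp hbij.injOn) hP₀ (fun v hv => (hc v hv).1) hT h1m hcut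
  exact ⟨cL, cR, hne, hall, hL, hR.trans (Set.ext fun _ => not_lt)⟩

theorem vertex_sets_after_breaking_longest_edge_with_largest_prim_order {V : Type*} [Fintype V] (G T : SimpleGraph V) (w : Sym2 V → ℝ)
    (hconn : G.Connected) (v₀ : V) (P : V → ℕ) (c : V → V)
    (hP : IsPrimOrderOn G w Set.univ v₀ P)
    (hc : ∀ v : V, P v ≠ 1 → P (c v) < P v ∧ G.Adj (c v) v ∧
      ∀ x y : V, P x < P v → P v ≤ P y → G.Adj x y → w s(c v, v) ≤ w s(x, y))
    (hTedges : T.edgeSet = {e | ∃ v, P v ≠ 1 ∧ e = s(c v, v)})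
    (vi vj : V) (hmem : s(vi, vj) ∈ T.edgeSet)
    (hmax : ∀ e ∈ T.edgeSet, w e ≤ w s(vi, vj))
    (hlargest : ∀ e ∈ T.edgeSet, w e = w s(vi, vj) → edgeOrder P e ≤ edgeOrder P s(vi, vj)) :
    ∃ cL cR : (T.deleteEdges {s(vi, vj)}).ConnectedComponent,
      cL ≠ cR ∧ (∀ cc, cc = cL ∨ cc = cR) ∧
      cL.supp = {v | P v < edgeOrder P s(vi, vj)} ∧
      cR.supp = {v | edgeOrder P s(vi, vj) ≤ P v} :=
  vertex_sets_after_breaking_longest_edge_with_largest_prim_order_general G T w v₀ P c hP hc hTedges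
    vi vj hmem hmax hlargest
end

section
/- Let T be a finite tree on vertex set V with real edge weights and pairwise distinct weights, let e_max be the edge of T of maximum weight, and let T_L and T_R be the two connected components of T − e_max with vertex sets V_L and V_R. If P is a Prim order of T whose seed vertex lies in V_L, then every vertex of V_L precedes every vertex of V_R in the order P; that is, P(u) < P(v) for all u ∈ V_L and v ∈ V_R. -/
open SimpleGraph

variable {V : Type*}

/-! Deleting the heaviest edge `e` of the tree splits it into `L ∋ v₀` and `R`. Let `v` be the first
vertex of `R` in the Prim order; it is attached through an edge leaving the earlier vertices, all of
which lie in `L`, so that edge is `e`. If some vertex of `L` came after `v`, a path inside `L` from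
the parent of `v` to it would cross the same cut through an edge other than `e`, of weight at least
`w e`: impossible, since `e` is the unique heaviest edge. -/

namespace SimpleGraph

variable {G : SimpleGraph V}

theorem Reachable.deleteEdges_reachable_or {x a : V} (h : G.Reachable x a) (b : V) :
    (G.deleteEdges {s(a, b)}).Reachable x a ∨ (G.deleteEdges {s(a, b)}).Reachable x b := by
  rw [reachable_iff_reflTransGen] at h
  induction h using Relation.ReflTransGen.head_induction_on with
  | refl => exact Or.inl .rfl
  | @head x y hxy _ ih =>
    by_cases he : s(x, y) = s(a, b)
    · rcases Sym2.eq_iff.mp he with ⟨rfl, -⟩ | ⟨rfl, -⟩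
      · exact Or.inl .rfl
      · exact Or.inr .rfl
    · have hxy' : (G.deleteEdges {s(a, b)}).Adj x y := deleteEdges_adj.mpr ⟨hxy, he⟩
      exact ih.imp hxy'.reachable.trans hxy'.reachable.trans

theorem Reachable.exists_adj_lt_le {a b : V} (h : G.Reachable a b) (f : V → ℕ) {k : ℕ}
    (ha : f a < k) (hb : k ≤ f b) : ∃ x y, G.Adj x y ∧ f x < k ∧ k ≤ f y := by
  obtain ⟨p⟩ := h
  obtain ⟨d, -, hd, hd'⟩ := p.exists_boundary_dart {x | f x < k} ha (not_lt.mpr hb)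
  exact ⟨d.fst, d.snd, d.adj, hd, not_lt.mp hd'⟩

end SimpleGraph

namespace IsPrimOrderOn

variable {H : SimpleGraph V} {w : Sym2 V → ℝ} {S : Set V} {v₀ : V} {P : V → ℕ}

theorem eq_seed_of_eq_one (hP : IsPrimOrderOn H w S v₀ P) {v : V} (hv : v ∈ S)
    (h : P v = 1) : v = v₀ :=
  hP.2.2.1.injOn hv hP.1 (h.trans hP.2.1.symm)

theorem exists_entry_edge (hP : IsPrimOrderOn H w S v₀ P) {R : Set V} (hRS : R ⊆ S)
    (hR : R.Nonempty) (hv₀ : v₀ ∉ R) :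
    ∃ u v, u ∉ R ∧ v ∈ R ∧ P u < P v ∧ H.Adj u v ∧ (∀ z ∈ R, P v ≤ P z) ∧
      ∀ x ∈ S, ∀ y ∈ S, H.Adj x y → P x < P v → P v ≤ P y →
        w s(u, v) ≤ w s(x, y) := by
  obtain ⟨v, hvR, hfirst⟩ := (InvImage.wf P wellFounded_lt).has_min R hR
  have hfirst' : ∀ z ∈ R, P v ≤ P z := fun z hz => not_lt.mp (hfirst z hz)
  have hv1 : P v ≠ 1 := fun h => hv₀ (hP.eq_seed_of_eq_one (hRS hvR) h ▸ hvR)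
  obtain ⟨u, -, hlt, hadj, hmin⟩ := hP.2.2.2 v (hRS hvR) hv1
  exact ⟨u, v, fun huR => (hfirst' u huR).not_gt hlt, hvR, hlt, hadj, hfirst',
    fun x hx y hy hxy hx' hy' => hmin x hx y hy hx' hy' hxy⟩

end IsPrimOrderOn

theorem left_subtree_precedes_right_subtree_in_prim_order_general {V : Type*} (T : SimpleGraph V) (w : Sym2 V → ℝ)
    (hT : IsTreeOn T Set.univ) (hdistinct : Set.InjOn w T.edgeSet)
    (vi vj : V) (hmem : s(vi, vj) ∈ T.edgeSet)
    (hmax : ∀ e ∈ T.edgeSet, w e ≤ w s(vi, vj))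
    (v₀ : V) (P : V → ℕ) (hP : IsPrimOrderOn T w Set.univ v₀ P)
    (hseed : v₀ ∈ ((T.deleteEdges {s(vi, vj)}).connectedComponentMk vi).supp) :
    ∀ u ∈ ((T.deleteEdges {s(vi, vj)}).connectedComponentMk vi).supp,
      ∀ v ∈ ((T.deleteEdges {s(vi, vj)}).connectedComponentMk vj).supp,
        P u < P v := by
  set T' := T.deleteEdges {s(vi, vj)}
  have hsep : ¬ T'.Reachable vi vj :=
    isBridge_iff.mp (isAcyclic_iff_forall_adj_isBridge.mp hT.2.2 (T.mem_edgeSet.mp hmem))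
  intro u hu v hv
  simp only [ConnectedComponent.mem_supp_iff, ConnectedComponent.eq] at hseed hu hv
  by_contra! hvu
  obtain ⟨u', v', hu'R, hv'R, hlt, hadj, hfirst, hmin⟩ :=
    hP.exists_entry_edge (R := {x | T'.Reachable x vj}) (Set.subset_univ _) ⟨v, hv⟩
      fun h => hsep (hseed.symm.trans h)
  have hu'L : T'.Reachable u' vi :=
    ((hT.2.1 u' trivial vi trivial).deleteEdges_reachable_or vj).resolve_right hu'R
  have hcross : s(u', v') = s(vi, vj) := by
    by_contra hne
    exact hsep (hu'L.symm.trans ((deleteEdges_adj.mpr ⟨hadj, hne⟩).reachable.trans hv'R))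
  obtain ⟨x, y, hxy, hx, hy⟩ :=
    (hu'L.trans hu.symm).exists_adj_lt_le P hlt ((hfirst v hv).trans hvu)
  rw [deleteEdges_adj] at hxy
  have hle : w s(vi, vj) ≤ w s(x, y) := hcross ▸ hmin x trivial y trivial hxy.1 hx hy
  exact hxy.2 (hdistinct hxy.1 hmem (le_antisymm (hmax _ hxy.1) hle))

theorem left_subtree_precedes_right_subtree_in_prim_order {V : Type*} [Fintype V] (T : SimpleGraph V) (w : Sym2 V → ℝ)
    (hT : IsTreeOn T Set.univ) (hdistinct : Set.InjOn w T.edgeSet)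
    (vi vj : V) (hmem : s(vi, vj) ∈ T.edgeSet)
    (hmax : ∀ e ∈ T.edgeSet, w e ≤ w s(vi, vj))
    (v₀ : V) (P : V → ℕ) (hP : IsPrimOrderOn T w Set.univ v₀ P)
    (hseed : v₀ ∈ ((T.deleteEdges {s(vi, vj)}).connectedComponentMk vi).supp) :
    ∀ u ∈ ((T.deleteEdges {s(vi, vj)}).connectedComponentMk vi).supp,
      ∀ v ∈ ((T.deleteEdges {s(vi, vj)}).connectedComponentMk vj).supp,
        P u < P v :=
  left_subtree_precedes_right_subtree_in_prim_order_general T w hT hdistinct vi vj hmem hmax v₀ P hP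
    hseed
end
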